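/- Theorem 1 (the Greedy-RP mechanism is truthful for single-minded bidders): fix the bids of all bidders other than j, and let bidder j have true type consisting of a nonzero bundle d* and a true valuation v* ≥ 0. For a report (d', v') by bidder j, her utility is (v* if d* ≤ d' pointwise, else 0) minus the payment p_j determined by GRP-P if j is granted by GRP-A, and 0 if j is not granted. Then the utility of the truthful report (d*, v*) is greater than or equal to the utility of every report (d', v') with d' a nonzero bundle and v' ≥ 0; in particular, truth-telling is a weakly dominant strategy. -/

import Mathlib

open Classical Finset

noncomputable section

/-- A bundle: requested amounts of each of the `k` VM types. -/
abbrev Bundle (k : ℕ) := Fin k → ℕ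

/-- A bid: a bundle together with a declared valuation. -/
abbrev Bid (k : ℕ) := Bundle k × ℝ

/-- A bundle is nonzero if some coordinate is positive. -/
def nonzeroBundle {k : ℕ} (d : Bundle k) : Prop := ∃ i, 0 < d i

/-- A valid bid requests a nonzero bundle and declares a nonnegative valuation. -/
def validBid {k : ℕ} (b : Bid k) : Prop := nonzeroBundle b.1 ∧ 0 ≤ b.2

/-- The weighted bundle size `d̂(d) = Σ_i (d i)·(f i)`. -/
def dhat {k : ℕ} (f : Fin k → ℝ) (d : Bundle k) : ℝ := ∑ i, (d i : ℝ) * f i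

/-- The bundle reserve price `ô(d) = Σ_i (d i)·(o i)`. -/
def ohat {k : ℕ} (o : Fin k → ℝ) (d : Bundle k) : ℝ := ∑ i, (d i : ℝ) * o i

/-- The bid density `e(d, v) = v / (d̂ d)^q`. -/
def density {k : ℕ} (f : Fin k → ℝ) (q : ℝ) (b : Bid k) : ℝ := b.2 / (dhat f b.1) ^ q

/-- The indices of the active set `A`, sorted in non-increasing order of bid density;
`mergeSort` is stable and `A.sort (· ≤ ·)` lists indices increasingly, so ties are
broken by smaller index first. -/
def sortedBids {k n : ℕ} (f : Fin k → ℝ) (q : ℝ) (B : Fin n → Bid k) (A : Finset (Fin n)) :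
    List (Fin n) :=
  (A.sort (· ≤ ·)).mergeSort (fun i j => decide (density f q (B j) ≤ density f q (B i)))

/-- Greedy-RP allocation scheme (GRP-A) run on the active index set `A`: process the
indices in non-increasing density order and grant an index whenever both the available
resource constraint (ARC) and the reserve price constraint (RPC) hold. -/
def grants {k n : ℕ} (o f : Fin k → ℝ) (s : Fin k → ℕ) (q : ℝ) (B : Fin n → Bid k)
    (A : Finset (Fin n)) : Finset (Fin n) :=
  (sortedBids f q B A).foldl
    (fun W j =>
      if (∀ i, (B j).1 i + ∑ j' ∈ W, (B j').1 i ≤ s i) ∧ ohat o (B j).1 ≤ (B j).2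
      then insert j W else W) ∅

/-- `W(B)`: the winners of GRP-A run on all bids. -/
def winners {k n : ℕ} (o f : Fin k → ℝ) (s : Fin k → ℕ) (q : ℝ) (B : Fin n → Bid k) :
    Finset (Fin n) :=
  grants o f s q B Finset.univ

/-- `W'_j = W(B_{-j}) \ W(B)`: the new winners once bid `j` is removed. -/
def competitorSet {k n : ℕ} (o f : Fin k → ℝ) (s : Fin k → ℕ) (q : ℝ) (B : Fin n → Bid k)
    (j : Fin n) : Finset (Fin n) :=
  grants o f s q B (Finset.univ.erase j) \ winners o f s q B

/-- The competitor density `e_j^comp`: the maximum density over `W'_j`, or `0` if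
`W'_j` is empty. -/
def ecomp {k n : ℕ} (o f : Fin k → ℝ) (s : Fin k → ℕ) (q : ℝ) (B : Fin n → Bid k)
    (j : Fin n) : ℝ :=
  if h : (competitorSet o f s q B j).Nonempty
  then (competitorSet o f s q B j).sup' h (fun i => density f q (B i))
  else 0

/-- The bid-specific reserve density `e_res(b) = ô(d)/(d̂ d)^q`. -/
def eres {k : ℕ} (o f : Fin k → ℝ) (q : ℝ) (b : Bid k) : ℝ := ohat o b.1 / (dhat f b.1) ^ q

/-- Greedy-RP pricing scheme (GRP-P): a winner `j` pays
`p_j = max(e_j^comp, e_res(b_j)) · (d̂ d_j)^q`; a non-winner pays `0`. -/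
def payment {k n : ℕ} (o f : Fin k → ℝ) (s : Fin k → ℕ) (q : ℝ) (B : Fin n → Bid k)
    (j : Fin n) : ℝ :=
  if j ∈ winners o f s q B
  then max (ecomp o f s q B j) (eres o f q (B j)) * (dhat f (B j).1) ^ q
  else 0

/-- The utility of a single-minded bidder `j` with true type `(dstar, vstar)` when the
submitted family of bids is `B` (so `(B j).1` is her reported bundle): if `j` is
granted by GRP-A she receives her reported bundle, valued at `vstar` if it contains
her true bundle and at `0` otherwise, and pays the GRP-P payment; otherwise her
utility is `0`. -/
def utility {k n : ℕ} (o f : Fin k → ℝ) (s : Fin k → ℕ) (q : ℝ) (B : Fin n → Bid k)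
    (j : Fin n) (dstar : Bundle k) (vstar : ℝ) : ℝ :=
  if j ∈ winners o f s q B then
    (if dstar ≤ (B j).1 then vstar else 0) - payment o f s q B j
  else 0


/-!
Cut the density-sorted list of bids at `j`. A competitor of the winner `j` is granted after `j` in
the run without `j`, so its density is at most `j`'s, as is the reserve density: a truthful winner
pays at most her value. A report `d' ≥ d*` can only cost more. If the truthful bid wins, the first
index `i` granted without `j` but refused with it overflows a resource together with `j` and the
earlier grants; once `j` asks for `d'`, one of these (each at least as dense as every truthful
competitor) loses and becomes a competitor of `d'`. If the truthful bid is refused for capacity,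
the earlier, denser grants are displaced in the same way and price `d'` above `v*`. A report not
containing `d*` earns at most `-p_j ≤ 0`.
-/

variable {k n : ℕ}

theorem List.Nodup.eq_of_pair_sublist {α : Type*} {a b : α} :
    ∀ {l : List α}, l.Nodup → List.Sublist [a, b] l → List.Sublist [b, a] l → a = b
  | [], _, hab, _ => by simp at hab
  | x :: t, hl, hab, hba => by
    rw [List.nodup_cons] at hl
    rw [List.sublist_cons_iff] at hab hba
    rcases hab with hab | ⟨r, hr, hrt⟩ <;> rcases hba with hba | ⟨r', hr', hrt'⟩
    · exact hl.2.eq_of_pair_sublist hab hba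
    · simp only [List.cons.injEq] at hr'
      exact absurd (hab.subset (by simp [hr'.1])) hl.1
    · simp only [List.cons.injEq] at hr
      exact absurd (hba.subset (by simp [hr.1])) hl.1
    · simp only [List.cons.injEq] at hr hr'
      rw [hr.1, hr'.1]

theorem List.Pairwise.forall_rel_append_cons {α : Type*} {R : α → α → Prop} {l₁ l₂ : List α}
    {a : α} (h : (l₁ ++ a :: l₂).Pairwise R) : (∀ x ∈ l₁, R x a) ∧ ∀ x ∈ l₂, R a x := by
  rw [List.pairwise_append, List.pairwise_cons] at h
  exact ⟨fun x hx => h.2.2 x hx a List.mem_cons_self, h.2.1.1⟩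

section Weights

variable {w : Fin k → ℝ} {d d' : Bundle k}

theorem nonzeroBundle.mono (hd : nonzeroBundle d) (h : d ≤ d') : nonzeroBundle d' :=
  let ⟨i, hi⟩ := hd; ⟨i, hi.trans_le (h i)⟩

theorem ohat_nonneg (hw : ∀ i, 0 ≤ w i) : 0 ≤ ohat w d :=
  Finset.sum_nonneg fun i _ => mul_nonneg (Nat.cast_nonneg _) (hw i)

theorem ohat_mono (hw : ∀ i, 0 ≤ w i) (h : d ≤ d') : ohat w d ≤ ohat w d' :=
  Finset.sum_le_sum fun i _ => mul_le_mul_of_nonneg_right (by exact_mod_cast h i) (hw i)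

theorem dhat_nonneg (hw : ∀ i, 0 ≤ w i) : 0 ≤ dhat w d :=
  ohat_nonneg hw

theorem dhat_mono (hw : ∀ i, 0 ≤ w i) (h : d ≤ d') : dhat w d ≤ dhat w d' :=
  ohat_mono hw h

theorem dhat_pos (hw : ∀ i, 0 < w i) (hd : nonzeroBundle d) : 0 < dhat w d := by
  obtain ⟨i, hi⟩ := hd
  exact Finset.sum_pos' (fun i _ => mul_nonneg (Nat.cast_nonneg _) (hw i).le)
    ⟨i, mem_univ i, mul_pos (by exact_mod_cast hi) (hw i)⟩

theorem density_nonneg (hw : ∀ i, 0 ≤ w i) (q : ℝ) {b : Bid k} (hb : 0 ≤ b.2) :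
    0 ≤ density w q b :=
  div_nonneg hb (Real.rpow_nonneg (dhat_nonneg hw) q)

end Weights

section Greedy

variable (o : Fin k → ℝ) (s : Fin k → ℕ) (C : Fin n → Bid k)

/-- The available resource constraint (ARC) for granting `j` on top of `W`; reducible, so that
`grantStep` picks the same decidability instance as `grants` and `grants_eq_foldl` is `rfl`. -/
abbrev Fits (W : Finset (Fin n)) (j : Fin n) : Prop :=
  ∀ i, (C j).1 i + ∑ x ∈ W, (C x).1 i ≤ s i

def Feasible (W : Finset (Fin n)) : Prop :=
  ∀ i, ∑ x ∈ W, (C x).1 i ≤ s i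

def grantStep (W : Finset (Fin n)) (j : Fin n) : Finset (Fin n) :=
  if Fits s C W j ∧ ohat o (C j).1 ≤ (C j).2 then insert j W else W

variable {o s C} {C' : Fin n → Bid k} {W W' : Finset (Fin n)} {j x : Fin n}

theorem Fits.anti (h : Fits s C W' j) (hW : W ⊆ W') : Fits s C W j :=
  fun i => (Nat.add_le_add_left (Finset.sum_le_sum_of_subset hW) _).trans (h i)

theorem fits_iff_feasible_insert (hj : j ∉ W) :
    Fits s C W j ↔ Feasible s C (insert j W) := by
  simp only [Fits, Feasible, Finset.sum_insert hj]

theorem Feasible.anti (h : Feasible s C W') (hW : W ⊆ W') : Feasible s C W :=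
  fun i => (Finset.sum_le_sum_of_subset hW).trans (h i)

theorem Feasible.of_fst_le (h : Feasible s C' W)
    (hC : ∀ x, (C x).1 ≤ (C' x).1) : Feasible s C W :=
  fun i => (Finset.sum_le_sum fun x _ => hC x i).trans (h i)

theorem grantStep_of_grant (h : Fits s C W j ∧ ohat o (C j).1 ≤ (C j).2) :
    grantStep o s C W j = insert j W :=
  if_pos h

theorem grantStep_of_not_grant (h : ¬ (Fits s C W j ∧ ohat o (C j).1 ≤ (C j).2)) :
    grantStep o s C W j = W :=
  if_neg h

theorem subset_grantStep : W ⊆ grantStep o s C W j := by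
  unfold grantStep; split_ifs <;> simp [Finset.subset_insert]

theorem grantStep_subset_insert : grantStep o s C W j ⊆ insert j W := by
  unfold grantStep; split_ifs <;> simp [Finset.subset_insert]

theorem subset_foldl_grantStep (l : List (Fin n)) (W : Finset (Fin n)) :
    W ⊆ l.foldl (grantStep o s C) W := by
  induction l generalizing W with
  | nil => rfl
  | cons i t ih => exact subset_grantStep.trans (ih _)

theorem foldl_grantStep_subset (l : List (Fin n)) (W : Finset (Fin n)) :
    l.foldl (grantStep o s C) W ⊆ W ∪ l.toFinset := by
  induction l generalizing W with
  | nil => simp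
  | cons i t ih =>
    refine (ih _).trans (Finset.union_subset_union grantStep_subset_insert le_rfl) |>.trans ?_
    intro x; simp only [Finset.mem_union, Finset.mem_insert, List.mem_toFinset, List.mem_cons]
    tauto

theorem Feasible.foldl_grantStep (h : Feasible s C W) (l : List (Fin n)) :
    Feasible s C (l.foldl (grantStep o s C) W) := by
  induction l generalizing W with
  | nil => exact h
  | cons i t ih =>
    refine ih ?_
    by_cases hi : Fits s C W i ∧ ohat o (C i).1 ≤ (C i).2
    · rw [grantStep_of_grant hi]
      by_cases hiW : i ∈ W
      · rwa [Finset.insert_eq_of_mem hiW]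
      · exact (fits_iff_feasible_insert hiW).1 hi.1
    · rwa [grantStep_of_not_grant hi]

theorem grantStep_congr (h : ∀ x ∈ insert j W, C x = C' x) :
    grantStep o s C W j = grantStep o s C' W j := by
  have hsum : ∀ i, ∑ x ∈ W, (C x).1 i = ∑ x ∈ W, (C' x).1 i := fun i =>
    Finset.sum_congr rfl fun x hx => by rw [h x (Finset.mem_insert_of_mem hx)]
  simp only [grantStep, Fits, hsum, h j (Finset.mem_insert_self j W)]

theorem foldl_grantStep_congr (l : List (Fin n)) (W : Finset (Fin n))
    (h : ∀ x, x ∈ W ∨ x ∈ l → C x = C' x) :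
    l.foldl (grantStep o s C) W = l.foldl (grantStep o s C') W := by
  induction l generalizing W with
  | nil => rfl
  | cons i t ih =>
    rw [List.foldl_cons, List.foldl_cons, grantStep_congr fun x hx => h x ?_]
    · refine ih _ fun x hx => h x ?_
      rcases hx with hx | hx
      · rcases Finset.mem_insert.1 (grantStep_subset_insert hx) with rfl | hx <;> simp [hx]
      · simp [hx]
    · rcases Finset.mem_insert.1 hx with rfl | hx <;> simp [hx]

theorem exists_first_divergence (l : List (Fin n)) {X : Finset (Fin n)}
    (hx : x ∈ l.foldl (grantStep o s C) X) (hx' : x ∉ l.foldl (grantStep o s C) (insert j X)) :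
    ∃ l₁ i l₂, l = l₁ ++ i :: l₂ ∧ (x = i ∨ x ∈ l₂) ∧
      (Fits s C (l₁.foldl (grantStep o s C) X) i ∧ ohat o (C i).1 ≤ (C i).2) ∧
      ¬ Fits s C (insert j (l₁.foldl (grantStep o s C) X)) i := by
  induction l generalizing X with
  | nil => exact absurd (Finset.mem_insert_of_mem hx) hx'
  | cons i t ih =>
    rw [List.foldl_cons] at hx hx'
    by_cases hj : Fits s C (insert j X) i ∧ ohat o (C i).1 ≤ (C i).2
    · have hX : Fits s C X i ∧ ohat o (C i).1 ≤ (C i).2 :=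
        ⟨hj.1.anti (Finset.subset_insert j X), hj.2⟩
      rw [grantStep_of_grant hX] at hx
      rw [grantStep_of_grant hj, Finset.insert_comm] at hx'
      obtain ⟨l₁, i', l₂, rfl, hxi, hfit, hnfit⟩ := ih hx hx'
      exact ⟨i :: l₁, i', l₂, rfl, hxi, by rwa [List.foldl_cons, grantStep_of_grant hX],
        by rwa [List.foldl_cons, grantStep_of_grant hX]⟩
    by_cases hX : Fits s C X i ∧ ohat o (C i).1 ≤ (C i).2
    · refine ⟨[], i, t, rfl, ?_, hX, fun h => hj ⟨h, hX.2⟩⟩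
      rw [grantStep_of_grant hX] at hx
      rw [grantStep_of_not_grant hj] at hx'
      have hxX : x ∉ insert j X := fun h => hx' (subset_foldl_grantStep t _ h)
      have := foldl_grantStep_subset t _ hx
      simp only [Finset.mem_union, Finset.mem_insert, List.mem_toFinset] at this hxX
      tauto
    · rw [grantStep_of_not_grant hX] at hx
      rw [grantStep_of_not_grant hj] at hx'
      obtain ⟨l₁, i', l₂, rfl, hxi, hfit, hnfit⟩ := ih hx hx'
      exact ⟨i :: l₁, i', l₂, rfl, hxi, by rwa [List.foldl_cons, grantStep_of_not_grant hX],
        by rwa [List.foldl_cons, grantStep_of_not_grant hX]⟩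

end Greedy

section Sorting

variable (f : Fin k → ℝ) (q : ℝ) (C : Fin n → Bid k)

theorem mem_sortedBids {A : Finset (Fin n)} {x : Fin n} : x ∈ sortedBids f q C A ↔ x ∈ A := by
  rw [sortedBids, List.mem_mergeSort, Finset.mem_sort]

theorem sortedBids_nodup (A : Finset (Fin n)) : (sortedBids f q C A).Nodup :=
  (List.mergeSort_perm _ _).nodup_iff.2 (A.sort_nodup _)

theorem sortedBids_pairwise (A : Finset (Fin n)) :
    (sortedBids f q C A).Pairwise fun a b => density f q (C b) ≤ density f q (C a) :=
  List.pairwise_mergeSort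
    (le := fun a b => decide (density f q (C b) ≤ density f q (C a)))
    (fun a b c hab hbc => by simp only [decide_eq_true_eq] at *; exact hbc.trans hab)
    (fun a b => by simpa using le_total _ _) (A.sort (· ≤ ·)) |>.imp (by simp)

theorem sortedBids_congr {C' : Fin n → Bid k} {A : Finset (Fin n)} (h : ∀ x ∈ A, C x = C' x) :
    sortedBids f q C A = sortedBids f q C' A := by
  unfold sortedBids
  simpa using List.map_mergeSort (f := id) fun a ha b hb => by
    rw [Finset.mem_sort] at ha hb
    rw [h a ha, h b hb, id, id]

def DensityLex (a b : Fin n) : Prop :=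
  density f q (C b) < density f q (C a) ∨ (density f q (C a) = density f q (C b) ∧ a < b)

theorem densityLex_asymm {a b : Fin n} (hab : DensityLex f q C a b)
    (hba : DensityLex f q C b a) : False := by
  rcases hab with h | ⟨h, h'⟩ <;> rcases hba with g | ⟨g, g'⟩ <;> order

theorem sortedBids_pairwise_densityLex (A : Finset (Fin n)) :
    (sortedBids f q C A).Pairwise (DensityLex f q C) := by
  rw [List.pairwise_iff_forall_sublist]
  intro a b hab
  rcases (List.pairwise_iff_forall_sublist.1 (sortedBids_pairwise f q C A) hab).lt_or_eq
    with h | h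
  · exact Or.inl h
  refine Or.inr ⟨h.symm, lt_of_not_ge fun hba => ?_⟩
  have hne : a ≠ b := by
    simpa using (sortedBids_nodup f q C A).sublist hab
  have hba' : List.Sublist [b, a] (A.sort (· ≤ ·)) := by
    refine List.sublist_of_subperm_of_pairwise (r := (· < ·))
      (List.subperm_of_subset (by simpa using hne.symm) ?_) (by simpa using hba.lt_of_ne hne.symm)
      (A.sortedLT_sort.pairwise)
    have ha := hab.subset (List.mem_cons_self (a := a) (l := [b]))
    have hb := hab.subset (by simp : b ∈ [a, b])
    rw [mem_sortedBids] at ha hb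
    simp [List.subset_def, ha, hb]
  exact hne ((sortedBids_nodup f q C A).eq_of_pair_sublist hab
    (List.pair_sublist_mergeSort
      (fun a b c hab hbc => by simp only [decide_eq_true_eq] at *; exact hbc.trans hab)
      (fun a b => by simpa using le_total _ _) (by simp [h]) hba'))

theorem sortedBids_erase (A : Finset (Fin n)) (j : Fin n) :
    (sortedBids f q C A).erase j = sortedBids f q C (A.erase j) := by
  refine List.Perm.eq_of_pairwise (le := DensityLex f q C) (fun a b _ _ hab hba => ?_)
    ((sortedBids_pairwise_densityLex f q C A).sublist List.erase_sublist)
    (sortedBids_pairwise_densityLex f q C _) ?_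
  · exact (densityLex_asymm f q C hab hba).elim
  · rw [List.perm_ext_iff_of_nodup ((sortedBids_nodup f q C A).erase j) (sortedBids_nodup f q C _)]
    intro x
    rw [(sortedBids_nodup f q C A).mem_erase_iff, mem_sortedBids, mem_sortedBids,
      Finset.mem_erase]

theorem exists_split_sortedBids (j : Fin n) :
    ∃ p l, sortedBids f q C univ = p ++ j :: l ∧ sortedBids f q C (univ.erase j) = p ++ l := by
  obtain ⟨p, l, hL, hjp⟩ := List.eq_append_cons_of_mem ((mem_sortedBids f q C).2 (mem_univ j))
  refine ⟨p, l, hL, ?_⟩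
  rw [← sortedBids_erase, hL, List.erase_append_right _ hjp, List.erase_cons_head]

theorem notMem_sortedBids_erase (j : Fin n) :
    j ∉ sortedBids f q C (univ.erase j) := by
  simp [mem_sortedBids]

end Sorting

section Mechanism

variable {o f : Fin k → ℝ} {s : Fin k → ℕ} {q : ℝ} {C C' : Fin n → Bid k} {j x : Fin n}

theorem grants_eq_foldl (A : Finset (Fin n)) :
    grants o f s q C A = (sortedBids f q C A).foldl (grantStep o s C) ∅ :=
  rfl

theorem mem_of_mem_foldl_grantStep_empty {l : List (Fin n)}
    (h : x ∈ l.foldl (grantStep o s C) ∅) : x ∈ l := by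
  simpa using foldl_grantStep_subset l ∅ h

theorem grants_subset (A : Finset (Fin n)) : grants o f s q C A ⊆ A := fun _ hx =>
  (mem_sortedBids f q C).1 (mem_of_mem_foldl_grantStep_empty hx)

theorem winners_feasible : Feasible s C (winners o f s q C) :=
  Feasible.foldl_grantStep (fun i => by simp) _

theorem grants_erase_congr (h : ∀ x, x ≠ j → C x = C' x) :
    grants o f s q C (univ.erase j) = grants o f s q C' (univ.erase j) := by
  have hA : ∀ x ∈ univ.erase j, C x = C' x := fun x hx => h x (ne_of_mem_erase hx)
  rw [grants_eq_foldl, grants_eq_foldl, sortedBids_congr f q C hA]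
  exact foldl_grantStep_congr _ _ fun x hx =>
    hA x ((mem_sortedBids f q C').1 (by simpa using hx))

theorem ne_of_mem_competitorSet (hx : x ∈ competitorSet o f s q C j) : x ≠ j :=
  ne_of_mem_erase (grants_subset _ (mem_sdiff.1 hx).1)

section Split

variable {p l : List (Fin n)}

theorem winners_eq_of_split (hL : sortedBids f q C univ = p ++ j :: l) :
    winners o f s q C =
      l.foldl (grantStep o s C) (grantStep o s C (p.foldl (grantStep o s C) ∅) j) := by
  rw [winners, grants_eq_foldl, hL, List.foldl_append, List.foldl_cons]

theorem grants_erase_eq_of_split (hL' : sortedBids f q C (univ.erase j) = p ++ l) :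
    grants o f s q C (univ.erase j) = l.foldl (grantStep o s C) (p.foldl (grantStep o s C) ∅) := by
  rw [grants_eq_foldl, hL', List.foldl_append]

theorem mem_winners_iff_of_split (hL : sortedBids f q C univ = p ++ j :: l)
    (hL' : sortedBids f q C (univ.erase j) = p ++ l) :
    j ∈ winners o f s q C ↔
      Fits s C (p.foldl (grantStep o s C) ∅) j ∧ ohat o (C j).1 ≤ (C j).2 := by
  rw [winners_eq_of_split hL]
  refine ⟨fun hj => ?_, fun h => ?_⟩
  · by_contra h
    rw [grantStep_of_not_grant h, ← grants_erase_eq_of_split hL'] at hj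
    exact (mem_erase.1 (grants_subset _ hj)).1 rfl
  · rw [grantStep_of_grant h]
    exact subset_foldl_grantStep _ _ (mem_insert_self j _)

end Split

theorem le_ecomp (hx : x ∈ competitorSet o f s q C j) :
    density f q (C x) ≤ ecomp o f s q C j := by
  rw [ecomp, dif_pos ⟨x, hx⟩]
  exact le_sup' (fun i => density f q (C i)) hx

theorem ecomp_le {t : ℝ} (ht : 0 ≤ t)
    (h : ∀ x ∈ competitorSet o f s q C j, density f q (C x) ≤ t) : ecomp o f s q C j ≤ t := by
  unfold ecomp
  split_ifs
  · exact sup'_le _ _ h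
  · exact ht

theorem ecomp_nonneg (hf : ∀ i, 0 ≤ f i) (hC : ∀ x, x ≠ j → 0 ≤ (C x).2) :
    0 ≤ ecomp o f s q C j := by
  by_cases hne : (competitorSet o f s q C j).Nonempty
  · obtain ⟨x, hx⟩ := hne
    exact (density_nonneg hf q (hC x (ne_of_mem_competitorSet hx))).trans (le_ecomp hx)
  · rw [ecomp, dif_neg hne]

theorem payment_nonneg (hf : ∀ i, 0 ≤ f i) (ho : ∀ i, 0 ≤ o i) : 0 ≤ payment o f s q C j := by
  have hD : 0 ≤ dhat f (C j).1 ^ q := Real.rpow_nonneg (dhat_nonneg hf) q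
  unfold payment
  split_ifs
  · exact mul_nonneg ((div_nonneg (ohat_nonneg ho) hD).trans (le_max_right _ _)) hD
  · rfl

theorem payment_eq_max (hf : ∀ i, 0 < f i) (hj : j ∈ winners o f s q C)
    (hd : nonzeroBundle (C j).1) :
    payment o f s q C j = max (ecomp o f s q C j * dhat f (C j).1 ^ q) (ohat o (C j).1) := by
  have hD := Real.rpow_pos_of_pos (dhat_pos hf hd) q
  rw [payment, if_pos hj, max_mul_of_nonneg _ _ hD.le, eres, div_mul_cancel₀ _ hD.ne']

theorem exists_mem_competitorSet {T : Finset (Fin n)} (hj : j ∈ winners o f s q C)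
    (hT : T ⊆ grants o f s q C (univ.erase j)) (hT' : ¬ Feasible s C (insert j T)) :
    ∃ y ∈ T, y ∈ competitorSet o f s q C j := by
  by_contra! h
  refine hT' (winners_feasible.anti (insert_subset hj fun y hy => ?_))
  by_contra hy'
  exact h y hy (mem_sdiff.2 ⟨hT hy, hy'⟩)

theorem fst_le_fst_of_forall_ne_eq (hCC' : ∀ x, x ≠ j → C x = C' x) (hle : (C j).1 ≤ (C' j).1)
    (x : Fin n) : (C x).1 ≤ (C' x).1 := by
  rcases eq_or_ne x j with rfl | hx
  · exact hle
  · rw [hCC' x hx]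

theorem payment_le_of_mem_winners (hf : ∀ i, 0 < f i) (hj : j ∈ winners o f s q C)
    (hd : nonzeroBundle (C j).1) (hv : 0 ≤ (C j).2) : payment o f s q C j ≤ (C j).2 := by
  obtain ⟨p, l, hL, hL'⟩ := exists_split_sortedBids f q C j
  have hgrant := (mem_winners_iff_of_split hL hL').1 hj
  have hcomp : ∀ x ∈ competitorSet o f s q C j, density f q (C x) ≤ density f q (C j) := by
    intro x hx
    rw [competitorSet, mem_sdiff, grants_erase_eq_of_split hL', winners_eq_of_split hL,
      grantStep_of_grant hgrant] at hx
    obtain ⟨l₁, i, l₂, rfl, hxi, -⟩ := exists_first_divergence l hx.1 hx.2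
    refine (hL ▸ sortedBids_pairwise f q C univ).forall_rel_append_cons.2 x
      (List.mem_append_right _ ?_)
    rcases hxi with rfl | hx
    exacts [List.mem_cons_self, List.mem_cons_of_mem _ hx]
  have hD := Real.rpow_pos_of_pos (dhat_pos hf hd) q
  rw [payment_eq_max hf hj hd, max_le_iff]
  refine ⟨?_, hgrant.2⟩
  calc ecomp o f s q C j * dhat f (C j).1 ^ q ≤ density f q (C j) * dhat f (C j).1 ^ q :=
        mul_le_mul_of_nonneg_right (ecomp_le (density_nonneg (fun i => (hf i).le) q hv) hcomp)
          hD.le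
    _ = (C j).2 := div_mul_cancel₀ _ hD.ne'

theorem le_payment_of_notMem_winners (hf : ∀ i, 0 < f i) (ho : ∀ i, 0 ≤ o i) (hq : 0 ≤ q)
    (hCC' : ∀ x, x ≠ j → C x = C' x) (hle : (C j).1 ≤ (C' j).1) (hd : nonzeroBundle (C j).1)
    (hv : 0 ≤ (C j).2) (hj : j ∉ winners o f s q C) (hj' : j ∈ winners o f s q C') :
    (C j).2 ≤ payment o f s q C' j := by
  rw [payment_eq_max hf hj' (hd.mono hle)]
  by_cases hrpc : ohat o (C j).1 ≤ (C j).2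
  swap
  · exact (not_le.1 hrpc).le.trans ((ohat_mono ho hle).trans (le_max_right _ _))
  obtain ⟨p, l, hL, hL'⟩ := exists_split_sortedBids f q C j
  set X := p.foldl (grantStep o s C) ∅
  have hXp : ∀ x ∈ X, x ∈ p := fun x hx => mem_of_mem_foldl_grantStep_empty hx
  have hjX : j ∉ X := fun h =>
    notMem_sortedBids_erase f q C j (hL' ▸ List.mem_append_left l (hXp j h))
  have hXW : X ⊆ grants o f s q C' (univ.erase j) := by
    rw [← grants_erase_congr hCC', grants_erase_eq_of_split hL']
    exact subset_foldl_grantStep _ _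
  have hinf : ¬ Feasible s C' (insert j X) := fun h =>
    hj ((mem_winners_iff_of_split hL hL').2
      ⟨(fits_iff_feasible_insert hjX).2 (h.of_fst_le (fst_le_fst_of_forall_ne_eq hCC' hle)), hrpc⟩)
  obtain ⟨x, hxX, hx⟩ := exists_mem_competitorSet hj' hXW hinf
  have hjx : density f q (C j) ≤ density f q (C' x) := by
    rw [← hCC' x (ne_of_mem_competitorSet hx)]
    exact (hL ▸ sortedBids_pairwise f q C univ).forall_rel_append_cons.1 x (hXp x hxX)
  have hf' : ∀ i, 0 ≤ f i := fun i => (hf i).le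
  have hD := dhat_pos hf hd
  have hD' : 0 ≤ dhat f (C' j).1 ^ q := Real.rpow_nonneg (dhat_nonneg hf') q
  calc (C j).2 = density f q (C j) * dhat f (C j).1 ^ q :=
        (div_mul_cancel₀ _ (Real.rpow_pos_of_pos hD q).ne').symm
    _ ≤ density f q (C' x) * dhat f (C' j).1 ^ q :=
        mul_le_mul hjx (Real.rpow_le_rpow hD.le (dhat_mono hf' hle) hq)
          (Real.rpow_nonneg hD.le q) ((density_nonneg hf' q hv).trans hjx)
    _ ≤ ecomp o f s q C' j * dhat f (C' j).1 ^ q := mul_le_mul_of_nonneg_right (le_ecomp hx) hD'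
    _ ≤ _ := le_max_left _ _

/-- The grants before the first divergence `i`, together with `i` and `j`, overflow a resource,
so one of them loses once `j` asks for more. -/
theorem exists_mem_competitorSet_density_ge (hCC' : ∀ x, x ≠ j → C x = C' x)
    (hle : (C j).1 ≤ (C' j).1) (hj : j ∈ winners o f s q C) (hj' : j ∈ winners o f s q C')
    (hx : x ∈ competitorSet o f s q C j) :
    ∃ y ∈ competitorSet o f s q C' j, density f q (C x) ≤ density f q (C' y) := by
  obtain ⟨p, l, hL, hL'⟩ := exists_split_sortedBids f q C j
  rw [competitorSet, mem_sdiff, grants_erase_eq_of_split hL', winners_eq_of_split hL,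
    grantStep_of_grant ((mem_winners_iff_of_split hL hL').1 hj)] at hx
  obtain ⟨l₁, i, l₂, rfl, hxi, hfit, hnfit⟩ := exists_first_divergence l hx.1 hx.2
  rw [← List.foldl_append] at hfit hnfit
  rw [← List.append_assoc] at hL'
  set G := (p ++ l₁).foldl (grantStep o s C) ∅
  have hGp : ∀ y ∈ G, y ∈ p ++ l₁ := fun y hy => mem_of_mem_foldl_grantStep_empty hy
  have hnd := hL' ▸ sortedBids_nodup f q C (univ.erase j)
  have hiG : i ∉ G := fun h =>
    (List.nodup_append.1 hnd).2.2 i (hGp i h) i List.mem_cons_self rfl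
  have hij : i ≠ j := by
    rintro rfl
    exact notMem_sortedBids_erase f q C i (by simp [hL'])
  obtain ⟨hbefore, hafter⟩ :=
    (hL' ▸ sortedBids_pairwise f q C (univ.erase j)).forall_rel_append_cons
  have hT : insert i G ⊆ grants o f s q C' (univ.erase j) := by
    rw [← grants_erase_congr hCC', grants_erase_eq_of_split hL', List.foldl_cons,
      grantStep_of_grant hfit]
    exact subset_foldl_grantStep _ _
  have hinf : ¬ Feasible s C' (insert j (insert i G)) := fun h => by
    rw [insert_comm] at h
    exact hnfit ((fits_iff_feasible_insert (by simp [hij, hiG])).2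
      (h.of_fst_le (fst_le_fst_of_forall_ne_eq hCC' hle)))
  obtain ⟨y, hyT, hy⟩ := exists_mem_competitorSet hj' hT hinf
  refine ⟨y, hy, ?_⟩
  rw [← hCC' y (ne_of_mem_competitorSet hy)]
  calc density f q (C x) ≤ density f q (C i) := by
        rcases hxi with rfl | hx
        exacts [le_rfl, hafter x hx]
    _ ≤ density f q (C y) := by
        rcases mem_insert.1 hyT with rfl | hy
        exacts [le_rfl, hbefore y (hGp y hy)]

theorem payment_le_payment_of_le (hf : ∀ i, 0 < f i) (ho : ∀ i, 0 ≤ o i) (hq : 0 ≤ q)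
    (hCC' : ∀ x, x ≠ j → C x = C' x) (hle : (C j).1 ≤ (C' j).1) (hd : nonzeroBundle (C j).1)
    (hB : ∀ x, x ≠ j → 0 ≤ (C x).2) (hj : j ∈ winners o f s q C)
    (hj' : j ∈ winners o f s q C') : payment o f s q C j ≤ payment o f s q C' j := by
  have hf' : ∀ i, 0 ≤ f i := fun i => (hf i).le
  have hcomp' : 0 ≤ ecomp o f s q C' j :=
    ecomp_nonneg hf' fun x hx => hCC' x hx ▸ hB x hx
  have hcomp : ecomp o f s q C j ≤ ecomp o f s q C' j := ecomp_le hcomp' fun x hx => by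
    obtain ⟨y, hy, hxy⟩ := exists_mem_competitorSet_density_ge hCC' hle hj hj' hx
    exact hxy.trans (le_ecomp hy)
  have hD := dhat_pos hf hd
  rw [payment_eq_max hf hj hd, payment_eq_max hf hj' (hd.mono hle)]
  exact max_le_max
    (mul_le_mul hcomp (Real.rpow_le_rpow hD.le (dhat_mono hf' hle) hq)
      (Real.rpow_nonneg hD.le q) hcomp')
    (ohat_mono ho hle)

theorem utility_le_utility_truthful (hf : ∀ i, 0 < f i) (ho : ∀ i, 0 ≤ o i) (hq : 0 ≤ q)
    (hCC' : ∀ x, x ≠ j → C x = C' x) (hB : ∀ x, x ≠ j → 0 ≤ (C x).2)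
    (hd : nonzeroBundle (C j).1) (hv : 0 ≤ (C j).2) :
    utility o f s q C' j (C j).1 (C j).2 ≤ utility o f s q C j (C j).1 (C j).2 := by
  have hIR : 0 ≤ utility o f s q C j (C j).1 (C j).2 := by
    rw [utility, if_pos le_rfl]
    split_ifs with hj
    exacts [sub_nonneg.2 (payment_le_of_mem_winners hf hj hd hv), le_rfl]
  rw [utility]
  split_ifs with hj' hle
  · rw [utility, if_pos le_rfl]
    split_ifs with hj
    · linarith [payment_le_payment_of_le hf ho hq hCC' hle hd hB hj hj']
    · linarith [le_payment_of_notMem_winners hf ho hq hCC' hle hd hv hj hj']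
  · linarith [payment_nonneg (s := s) (q := q) (C := C') (j := j) (fun i => (hf i).le) ho]
  · exact hIR

end Mechanism

theorem grp_truthful_general {k n : ℕ}
    (f o : Fin k → ℝ) (hf : ∀ i, 0 < f i) (ho : ∀ i, 0 ≤ o i)
    (s : Fin k → ℕ) (q : ℝ) (hq : 0 < q)
    (B : Fin n → Bid k) (j : Fin n)
    (hB : ∀ i, i ≠ j → validBid (B i))
    (dstar : Bundle k) (hdstar : nonzeroBundle dstar) (vstar : ℝ) (hvstar : 0 ≤ vstar)
    (d' : Bundle k) (v' : ℝ) :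
    utility o f s q (Function.update B j (d', v')) j dstar vstar ≤
      utility o f s q (Function.update B j (dstar, vstar)) j dstar vstar := by
  simpa using utility_le_utility_truthful (j := j) (C := Function.update B j (dstar, vstar))
    (C' := Function.update B j (d', v')) (s := s) hf ho hq.le
    (fun x hx => by simp [hx]) (fun x hx => by simpa [hx] using (hB x hx).2) (by simpa) (by simpa)

/-- Theorem 1, the Greedy-RP mechanism is truthful for single-minded
bidders: fixing the bids of all bidders other than `j`, if bidder `j` has true type
`(dstar, vstar)` with `dstar` a nonzero bundle and `vstar ≥ 0`, then the truthful
report `(dstar, vstar)` yields utility at least that of any report `(d', v')` with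
`d'` a nonzero bundle and `v' ≥ 0`; truth-telling is a weakly dominant strategy. -/
theorem grp_truthful {k n : ℕ} (hk : 1 ≤ k)
    (f o : Fin k → ℝ) (hf : ∀ i, 0 < f i) (ho : ∀ i, 0 ≤ o i)
    (s : Fin k → ℕ) (q : ℝ) (hq : 0 < q)
    (B : Fin n → Bid k) (j : Fin n)
    (hB : ∀ i, i ≠ j → validBid (B i))
    (dstar : Bundle k) (hdstar : nonzeroBundle dstar) (vstar : ℝ) (hvstar : 0 ≤ vstar)
    (d' : Bundle k) (hd' : nonzeroBundle d') (v' : ℝ) (hv' : 0 ≤ v') :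
    utility o f s q (Function.update B j (d', v')) j dstar vstar ≤
      utility o f s q (Function.update B j (dstar, vstar)) j dstar vstar :=
  grp_truthful_general f o hf ho s q hq B j hB dstar hdstar vstar hvstar d' v'
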